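/- For 0<q<1, every integer N ≥ 0, and real t, the bound |Γ_q(-N-1/2+it) Γ_q(N+3/2-it)| ≤ q^{N(N+2)/2} · ((-q^{1/2};q)_∞/(q^{1/2};q)_∞) · |Γ_q(1/2+it)Γ_q(3/2-it)| holds. -/

import Mathlib

open Complex Filter

noncomputable def qPochInf (a : ℂ) (q : ℝ) : ℂ := ∏' k : ℕ, (1 - a * (q : ℂ) ^ k)

noncomputable def qPoch (a : ℂ) (q : ℝ) (n : ℕ) : ℂ := ∏ k ∈ Finset.range n, (1 - a * (q : ℂ) ^ k)

noncomputable def qGamma (q : ℝ) (s : ℂ) : ℂ :=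
  qPochInf (q : ℂ) q / qPochInf ((q : ℂ) ^ s) q * ((1 : ℂ) - (q : ℂ)) ^ (1 - s)

noncomputable def Kq (q : ℝ) (s : ℂ) : ℂ :=
  qPochInf (-(q : ℂ)) q * qPochInf (-1) q * qPochInf (q : ℂ) q /
    (qPochInf (-(q : ℂ) ^ s) q * qPochInf (-(q : ℂ) ^ (1 - s)) q)

noncomputable def qMellin (q : ℝ) (f : ℝ → ℂ) (s : ℂ) : ℂ :=
  (1 - (q : ℂ)) * ∑' n : ℤ, f (q ^ n) * (q : ℂ) ^ ((n : ℂ) * s)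

noncomputable def qFact (q : ℝ) (n : ℕ) : ℂ := qPoch (q : ℂ) q n / ((1 : ℂ) - (q : ℂ)) ^ n


/-!
Iterating the functional equation of `Γ_q` relates `Γ_q(s - N - 1) Γ_q(2 - s + N)` to
`Γ_q(s) Γ_q(2 - s)` for `s = 1/2 + it`, with factor `(1 - q) (q^{2-s};q)_N / (q^{s-N-1};q)_{N+1}`.
The numerator has modulus at most `(-q^{1/2};q)_∞`. Reading the denominator backwards,
`(q^{s-N-1};q)_{N+1} ∏_{k ≤ N} q^{1-s+k} = ± (q^{1-s};q)_{N+1}`, so its modulus is at least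
`q^{-(N+1)²/2} (q^{1/2};q)_∞`; finally `(1 - q) q^{(N+1)²/2} ≤ q^{N(N+2)/2}`.
-/

open Finset

section RealProducts

variable {q c : ℝ}

lemma prod_le_tprod_one_add (hq0 : 0 ≤ q) (hq1 : q < 1) (hc : 0 ≤ c) (n : ℕ) :
    ∏ k ∈ range n, (1 + c * q ^ k) ≤ ∏' k : ℕ, (1 + c * q ^ k) := by
  have hmul : Multipliable fun k : ℕ => 1 + c * q ^ k :=
    Real.multipliable_one_add_of_summable ((summable_geometric_of_lt_one hq0 hq1).mul_left c)
  refine Monotone.ge_of_tendsto (monotone_nat_of_le_succ fun m => ?_) hmul.tendsto_prod_tprod_nat n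
  rw [prod_range_succ]
  exact le_mul_of_one_le_right (prod_nonneg fun k _ => by positivity)
    (le_add_of_nonneg_right (by positivity))

lemma multipliable_one_sub_mul_pow (hq0 : 0 ≤ q) (hq1 : q < 1) :
    Multipliable fun k : ℕ => 1 - c * q ^ k := by
  simp_rw [sub_eq_add_neg]
  exact Real.multipliable_one_add_of_summable
    ((summable_geometric_of_lt_one hq0 hq1).mul_left c).neg

lemma tprod_one_sub_le_prod (hq0 : 0 ≤ q) (hq1 : q < 1) (hc0 : 0 ≤ c) (hc1 : c ≤ 1) (n : ℕ) :
    ∏' k : ℕ, (1 - c * q ^ k) ≤ ∏ k ∈ range n, (1 - c * q ^ k) := by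
  have hfac : ∀ k : ℕ, c * q ^ k ≤ 1 := fun k =>
    mul_le_one₀ hc1 (by positivity) (pow_le_one₀ hq0 hq1.le)
  refine Antitone.le_of_tendsto (antitone_nat_of_succ_le fun m => ?_)
    (multipliable_one_sub_mul_pow hq0 hq1).tendsto_prod_tprod_nat n
  rw [prod_range_succ]
  exact mul_le_of_le_one_right (prod_nonneg fun k _ => sub_nonneg.2 (hfac k))
    (sub_le_self _ (by positivity))

lemma tprod_one_sub_pos (hq0 : 0 ≤ q) (hq1 : q < 1) (hc0 : 0 ≤ c) (hc1 : c < 1) :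
    0 < ∏' k : ℕ, (1 - c * q ^ k) := by
  have hfac : ∀ k : ℕ, c * q ^ k < 1 := fun k =>
    lt_of_le_of_lt (mul_le_of_le_one_right hc0 (pow_le_one₀ hq0 hq1.le)) hc1
  refine lt_of_le_of_ne (tprod_nonneg fun k => (sub_pos.2 (hfac k)).le) (Ne.symm ?_)
  simp_rw [sub_eq_add_neg]
  refine tprod_one_add_ne_zero_of_summable (fun k => ?_) ?_
  · linarith [hfac k]
  · simpa [abs_of_nonneg hc0, abs_of_nonneg hq0] using
      (summable_geometric_of_lt_one hq0 hq1).mul_left c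

lemma prod_range_sqrt_mul_pow (hq : 0 ≤ q) (n : ℕ) :
    ∏ k ∈ range n, (√q * q ^ k) = √q ^ (n ^ 2) := by
  induction n with
  | zero => simp
  | succ n ih =>
    rw [prod_range_succ, ih, ← Real.sq_sqrt hq, Real.sqrt_sq (Real.sqrt_nonneg q)]
    ring

lemma one_sub_mul_sqrt_pow_le (hq0 : 0 ≤ q) (hq1 : q ≤ 1) (N : ℕ) :
    (1 - q) * √q ^ ((N + 1) ^ 2) ≤ q ^ ((N ^ 2 + 2 * N : ℝ) / 2) := by
  have hrpow : q ^ ((N ^ 2 + 2 * N : ℝ) / 2) = √q ^ (N ^ 2 + 2 * N) := by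
    rw [show (N ^ 2 + 2 * N : ℝ) / 2 = 1 / 2 * ((N ^ 2 + 2 * N : ℕ) : ℝ) by push_cast; ring,
      Real.rpow_mul hq0, Real.rpow_natCast, Real.sqrt_eq_rpow]
  have hsqrt : √q ≤ 1 := Real.sqrt_le_one.2 hq1
  rw [hrpow, show (N + 1) ^ 2 = (N ^ 2 + 2 * N) + 1 by ring, pow_succ]
  calc (1 - q) * (√q ^ (N ^ 2 + 2 * N) * √q)
      = √q ^ (N ^ 2 + 2 * N) * ((1 - q) * √q) := by ring
    _ ≤ √q ^ (N ^ 2 + 2 * N) * 1 :=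
        mul_le_mul_of_nonneg_left (mul_le_one₀ (by linarith) (Real.sqrt_nonneg q) hsqrt)
          (by positivity)
    _ = √q ^ (N ^ 2 + 2 * N) := mul_one _

end RealProducts

section QPochhammer

variable {q : ℝ}

lemma qPochInf_eq_qPoch_mul (a : ℂ) (hq : |q| < 1) (n : ℕ) :
    qPochInf a q = qPoch a q n * qPochInf (a * (q : ℂ) ^ n) q := by
  have hshift : ∀ k : ℕ, 1 - a * (q : ℂ) ^ (k + n) = 1 - a * (q : ℂ) ^ n * (q : ℂ) ^ k :=
    fun k => by ring
  have htail : Multipliable fun k : ℕ => 1 - a * (q : ℂ) ^ (k + n) := by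
    simp_rw [hshift, sub_eq_add_neg]
    refine multipliable_one_add_of_summable ?_
    simpa [norm_mul, norm_pow] using
      (summable_geometric_of_lt_one (abs_nonneg q) hq).mul_left ‖a * (q : ℂ) ^ n‖
  rw [qPochInf, qPochInf, qPoch,
    ← Multipliable.prod_mul_tprod_nat_mul' (f := fun k => 1 - a * (q : ℂ) ^ k) htail]
  simp_rw [hshift]

lemma norm_qPoch_le (hq : 0 ≤ q) (a : ℂ) (n : ℕ) :
    ‖qPoch a q n‖ ≤ ∏ k ∈ range n, (1 + ‖a‖ * q ^ k) := by
  rw [qPoch]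
  refine (Finset.norm_prod_le _ _).trans (prod_le_prod (fun _ _ => norm_nonneg _) fun k _ => ?_)
  simpa [abs_of_nonneg hq] using norm_sub_le (1 : ℂ) (a * (q : ℂ) ^ k)

lemma norm_qPoch_le_tprod (hq0 : 0 ≤ q) (hq1 : q < 1) {a : ℂ} {c : ℝ} (hac : ‖a‖ ≤ c) (n : ℕ) :
    ‖qPoch a q n‖ ≤ ∏' k : ℕ, (1 + c * q ^ k) :=
  (norm_qPoch_le hq0 a n).trans <|
    (prod_le_prod (fun k _ => by positivity) fun k _ => by gcongr).trans
      (prod_le_tprod_one_add hq0 hq1 ((norm_nonneg a).trans hac) n)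

lemma prod_one_sub_le_norm_qPoch (hq0 : 0 ≤ q) (hq1 : q ≤ 1) {a : ℂ} (ha : ‖a‖ ≤ 1) (n : ℕ) :
    ∏ k ∈ range n, (1 - ‖a‖ * q ^ k) ≤ ‖qPoch a q n‖ := by
  rw [qPoch, norm_prod]
  refine prod_le_prod (fun k _ => sub_nonneg.2 ?_) fun k _ => ?_
  · exact mul_le_one₀ ha (by positivity) (pow_le_one₀ hq0 hq1)
  · simpa [abs_of_nonneg hq0] using norm_sub_norm_le (1 : ℂ) (a * (q : ℂ) ^ k)

lemma qPoch_ne_zero (hq0 : 0 ≤ q) (hq1 : q ≤ 1) {a : ℂ} (ha : ‖a‖ < 1) (n : ℕ) :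
    qPoch a q n ≠ 0 := by
  have hpos : 0 < ∏ k ∈ range n, (1 - ‖a‖ * q ^ k) := prod_pos fun k _ =>
    sub_pos.2 (lt_of_le_of_lt (mul_le_of_le_one_right (norm_nonneg a) (pow_le_one₀ hq0 hq1)) ha)
  exact norm_pos_iff.1 (hpos.trans_le (prod_one_sub_le_norm_qPoch hq0 hq1 ha.le n))

lemma qPoch_mul_prod_eq_neg_one_pow_mul (a b : ℂ) (n : ℕ) (hab : a * b * (q : ℂ) ^ n = 1) :
    qPoch a q (n + 1) * ∏ k ∈ range (n + 1), b * (q : ℂ) ^ k =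
      (-1) ^ (n + 1) * qPoch b q (n + 1) := by
  rw [qPoch, qPoch, ← prod_range_reflect (fun k => b * (q : ℂ) ^ k),
    ← prod_range_reflect (fun k => 1 - b * (q : ℂ) ^ k), ← prod_mul_distrib,
    show (-1 : ℂ) ^ (n + 1) = ∏ _k ∈ range (n + 1), (-1 : ℂ) by simp, ← prod_mul_distrib]
  refine prod_congr rfl fun k hk => ?_
  have hsplit : (q : ℂ) ^ n = (q : ℂ) ^ k * (q : ℂ) ^ (n + 1 - 1 - k) := by
    rw [← pow_add]; congr 1; have := mem_range.1 hk; omega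
  linear_combination -hab + a * b * hsplit

lemma tprod_one_sub_le_norm_qPoch_mul_prod (hq0 : 0 ≤ q) (hq1 : q < 1) {a b : ℂ} (hb : ‖b‖ ≤ 1)
    (n : ℕ) (hab : a * b * (q : ℂ) ^ n = 1) :
    ∏' k : ℕ, (1 - ‖b‖ * q ^ k) ≤ ‖qPoch a q (n + 1)‖ * ∏ k ∈ range (n + 1), ‖b‖ * q ^ k := by
  have hnorm := congrArg norm (qPoch_mul_prod_eq_neg_one_pow_mul a b n hab)
  simp only [norm_mul, norm_prod, norm_pow, norm_neg, norm_one, one_pow, one_mul, norm_real,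
    Real.norm_eq_abs, abs_of_nonneg hq0] at hnorm
  rw [hnorm]
  exact (tprod_one_sub_le_prod hq0 hq1 (norm_nonneg b) hb (n + 1)).trans
    (prod_one_sub_le_norm_qPoch hq0 hq1.le hb (n + 1))

lemma tprod_one_sub_sqrt_le_norm_qPoch_mul (hq0 : 0 < q) (hq1 : q < 1) {s : ℂ} (hs : s.re = 1/2)
    (n : ℕ) :
    ∏' k : ℕ, (1 - √q * q ^ k) ≤
      ‖qPoch ((q : ℂ) ^ (s - (n + 1 : ℕ))) q (n + 1)‖ * √q ^ ((n + 1) ^ 2) := by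
  have hb : ‖(q : ℂ) ^ (1 - s)‖ = √q := by
    rw [norm_cpow_eq_rpow_re_of_pos hq0, Real.sqrt_eq_rpow, sub_re, one_re, hs]
    norm_num
  have hab : (q : ℂ) ^ (s - (n + 1 : ℕ)) * (q : ℂ) ^ (1 - s) * (q : ℂ) ^ n = 1 := by
    have hq : (q : ℂ) ≠ 0 := ofReal_ne_zero.2 hq0.ne'
    rw [← cpow_natCast, ← cpow_add _ _ hq, ← cpow_add _ _ hq]
    push_cast
    ring_nf
    exact cpow_zero _
  have h := tprod_one_sub_le_norm_qPoch_mul_prod hq0.le hq1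
    (hb.trans_le (Real.sqrt_le_one.2 hq1.le)) n hab
  rwa [hb, prod_range_sqrt_mul_pow hq0.le] at h

end QPochhammer

section QGamma

variable {q : ℝ}

lemma one_sub_ofReal_ne_zero (hq : q ≠ 1) : (1 : ℂ) - q ≠ 0 := by
  rw [sub_ne_zero]; exact_mod_cast hq.symm

lemma qGamma_sub_nat (hq0 : 0 < q) (hq1 : q < 1) (s : ℂ) (n : ℕ) :
    qGamma q (s - n) = (1 - q) ^ n * qGamma q s / qPoch ((q : ℂ) ^ (s - n)) q n := by
  have hq : (q : ℂ) ≠ 0 := ofReal_ne_zero.2 hq0.ne'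
  have hpow : (q : ℂ) ^ (s - n) * (q : ℂ) ^ n = (q : ℂ) ^ s := by
    rw [← cpow_natCast, ← cpow_add _ _ hq, sub_add_cancel]
  have hexp : ((1 : ℂ) - q) ^ (1 - (s - n)) = (1 - q) ^ n * (1 - q) ^ (1 - s) := by
    rw [← cpow_natCast, ← cpow_add _ _ (one_sub_ofReal_ne_zero hq1.ne)]
    ring_nf
  rw [qGamma, qGamma, qPochInf_eq_qPoch_mul ((q : ℂ) ^ (s - n)) (abs_lt.2 ⟨by linarith, hq1⟩) n,
    hpow, hexp]
  ring

lemma qGamma_add_nat (hq0 : 0 < q) (hq1 : q < 1) (s : ℂ) {n : ℕ}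
    (hs : qPoch ((q : ℂ) ^ s) q n ≠ 0) :
    qGamma q (s + n) = qPoch ((q : ℂ) ^ s) q n * qGamma q s / (1 - q) ^ n := by
  have h1q := one_sub_ofReal_ne_zero hq1.ne
  have hsub := qGamma_sub_nat hq0 hq1 (s + n) n
  rw [add_sub_cancel_right] at hsub
  rw [hsub]
  field_simp

lemma qGamma_sub_succ_mul_qGamma_add (hq0 : 0 < q) (hq1 : q < 1) (s u : ℂ) {n : ℕ}
    (hu : qPoch ((q : ℂ) ^ u) q n ≠ 0) :
    qGamma q (s - (n + 1 : ℕ)) * qGamma q (u + n) =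
      (1 - q) * qPoch ((q : ℂ) ^ u) q n / qPoch ((q : ℂ) ^ (s - (n + 1 : ℕ))) q (n + 1) *
        (qGamma q s * qGamma q u) := by
  have h1q := one_sub_ofReal_ne_zero hq1.ne
  rw [qGamma_sub_nat hq0 hq1, qGamma_add_nat hq0 hq1 u hu, pow_succ]
  field_simp

lemma norm_qPoch_ratio_le (hq0 : 0 < q) (hq1 : q < 1) {s : ℂ} (hs : s.re = 1/2) (N : ℕ) :
    ‖(1 - q) * qPoch ((q : ℂ) ^ (2 - s)) q N / qPoch ((q : ℂ) ^ (s - (N + 1 : ℕ))) q (N + 1)‖ ≤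
      q ^ ((N ^ 2 + 2 * N : ℝ) / 2) *
        ((∏' k : ℕ, (1 + √q * q ^ k)) / (∏' k : ℕ, (1 - √q * q ^ k))) := by
  set P₁ := qPoch ((q : ℂ) ^ (s - (N + 1 : ℕ))) q (N + 1)
  set X := √q ^ ((N + 1) ^ 2)
  set Tp := ∏' k : ℕ, (1 + √q * q ^ k)
  set Tm := ∏' k : ℕ, (1 - √q * q ^ k)
  have hTm : 0 < Tm := tprod_one_sub_pos hq0.le hq1 (Real.sqrt_nonneg q)
    ((Real.sqrt_lt' one_pos).2 (by rwa [one_pow]))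
  have hP₁_ge : Tm ≤ ‖P₁‖ * X := tprod_one_sub_sqrt_le_norm_qPoch_mul hq0 hq1 hs N
  have hX : 0 < X := by positivity
  have hP₁ : 0 < ‖P₁‖ := pos_of_mul_pos_left (hTm.trans_le hP₁_ge) hX.le
  have hP₃_le : ‖qPoch ((q : ℂ) ^ (2 - s)) q N‖ ≤ Tp := by
    refine norm_qPoch_le_tprod hq0.le hq1 ?_ N
    rw [norm_cpow_eq_rpow_re_of_pos hq0, Real.sqrt_eq_rpow, sub_re, hs]
    exact Real.rpow_le_rpow_of_exponent_ge hq0 hq1.le (by norm_num)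
  have hratio : 0 ≤ Tp / Tm := div_nonneg (tprod_nonneg fun k => by positivity) hTm.le
  rw [show (1 : ℂ) - q = ((1 - q : ℝ) : ℂ) by push_cast; ring, norm_div, norm_mul, norm_real,
    Real.norm_of_nonneg (by linarith), div_le_iff₀ hP₁]
  calc (1 - q) * ‖qPoch ((q : ℂ) ^ (2 - s)) q N‖ ≤ (1 - q) * Tp :=
        mul_le_mul_of_nonneg_left hP₃_le (by linarith)
    _ = (1 - q) * X * (Tp / Tm) * (Tm / X) := by field_simp
    _ ≤ q ^ ((N ^ 2 + 2 * N : ℝ) / 2) * (Tp / Tm) * ‖P₁‖ :=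
        mul_le_mul (mul_le_mul_of_nonneg_right (one_sub_mul_sqrt_pow_le hq0.le hq1.le N) hratio)
          ((div_le_iff₀ hX).2 hP₁_ge) (by positivity) (by positivity)

end QGamma

theorem qGamma_product_bound (q : ℝ) (hq : 0 < q) (hq1 : q < 1) (N : ℕ) (t : ℝ) :
    ‖qGamma q (-(N : ℂ) - 1/2 + (t : ℂ) * I) * qGamma q ((N : ℂ) + 3/2 - (t : ℂ) * I)‖ ≤
      q ^ ((N ^ 2 + 2 * N : ℝ) / 2) *
        ((∏' k : ℕ, (1 + Real.sqrt q * q ^ k)) / (∏' k : ℕ, (1 - Real.sqrt q * q ^ k))) *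
        ‖qGamma q (1/2 + (t : ℂ) * I) * qGamma q (3/2 - (t : ℂ) * I)‖ := by
  have hs : (1/2 + t * I : ℂ).re = 1/2 := by simp
  have hP₃ : qPoch ((q : ℂ) ^ (2 - (1/2 + t * I))) q N ≠ 0 := by
    refine qPoch_ne_zero hq.le hq1.le ?_ N
    rw [norm_cpow_eq_rpow_re_of_pos hq, sub_re, hs]
    exact Real.rpow_lt_one hq.le hq1 (by norm_num)
  rw [show -(N : ℂ) - 1/2 + t * I = (1/2 + t * I) - ((N + 1 : ℕ) : ℂ) by push_cast; ring,
    show (N : ℂ) + 3/2 - t * I = (2 - (1/2 + t * I)) + N by ring,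
    show (3/2 - t * I : ℂ) = 2 - (1/2 + t * I) by ring,
    qGamma_sub_succ_mul_qGamma_add hq hq1 _ _ hP₃, norm_mul]
  exact mul_le_mul_of_nonneg_right (norm_qPoch_ratio_le hq hq1 hs N) (norm_nonneg _)
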